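/- For every x > 0 and every ν > -3/2, the modified Bessel function of the first kind satisfies the strict inequality I_ν(x) < ((ν+2)/Γ(ν+2))·(x/2)^ν·e^{2x}. -/

import Mathlib

/-- The modified Bessel function of the first kind of order `ν`, with the convention that
`1/Γ` vanishes at the poles of `Γ` (which is Mathlib's convention for `Real.Gamma`). -/
noncomputable def besselI (ν x : ℝ) : ℝ :=
  ∑' m : ℕ, (x / 2) ^ (2 * (m : ℝ) + ν) / ((m.factorial : ℝ) * Real.Gamma ((m : ℝ) + ν + 1))

/-!
Since `(x/2)^(2m) = (2x)^(2m) / 16^m`, it suffices to compare the `m`-th coefficient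
`1 / (m! Γ(m+ν+1))` with `(ν+2)/Γ(ν+2) · 16^m / (2m)!`; an induction on `m` does this for
`ν > -3/2`. Summing, `I_ν(x) ≤ (ν+2)/Γ(ν+2) · (x/2)^ν · cosh (2x)`, and `cosh (2x) < e^{2x}`.
-/

open Real Nat

-- Valid also at the poles of `Γ`, where Mathlib's `Gamma` takes the value `0`.
lemma Real.inv_Gamma_eq_mul_inv_Gamma_add_one (s : ℝ) : (Gamma s)⁻¹ = s * (Gamma (s + 1))⁻¹ := by
  rcases eq_or_ne s 0 with rfl | hs
  · simp [Gamma_zero]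
  · rw [Gamma_add_one hs, mul_inv, ← mul_assoc, mul_inv_cancel₀ hs, one_mul]

lemma Real.cosh_lt_exp {x : ℝ} (hx : 0 < x) : cosh x < exp x := by
  have := exp_lt_exp.2 (neg_lt_self hx)
  rw [cosh_eq]
  linarith

section

variable {ν : ℝ} (hν : -(3 : ℝ) / 2 < ν)
include hν

lemma Gamma_mul_factorial_two_mul_le {m : ℕ} (hm : 1 ≤ m) :
    Gamma (ν + 2) * (2 * m)! ≤ (ν + 2) * 16 ^ m * m ! * Gamma (m + ν + 1) := by
  have hG : 0 < Gamma (ν + 2) := Gamma_pos_of_pos (by linarith)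
  induction m, hm using Nat.le_induction with
  | base =>
    norm_num [add_comm (1 : ℝ) ν, add_assoc]
    nlinarith
  | succ m hm ih =>
    have hm' : (1 : ℝ) ≤ m := by exact_mod_cast hm
    have hpos : 0 < (m : ℝ) + ν + 1 := by linarith
    have hquad : (2 * (m : ℝ) + 2) * (2 * m + 1) ≤ 16 * ((m : ℝ) + 1) * (m + ν + 1) := by
      nlinarith
    calc Gamma (ν + 2) * (2 * (m + 1))!
        = (2 * (m : ℝ) + 2) * (2 * m + 1) * (Gamma (ν + 2) * (2 * m)!) := by
          rw [show 2 * (m + 1) = 2 * m + 1 + 1 by ring, factorial_succ, factorial_succ]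
          push_cast
          ring
      _ ≤ 16 * ((m : ℝ) + 1) * (m + ν + 1) * ((ν + 2) * 16 ^ m * m ! * Gamma (m + ν + 1)) :=
          mul_le_mul hquad ih (by positivity) (by nlinarith)
      _ = (ν + 2) * 16 ^ (m + 1) * (m + 1)! * Gamma ((m + 1 : ℕ) + ν + 1) := by
          rw [show ((m + 1 : ℕ) : ℝ) + ν + 1 = (m + ν + 1) + 1 by push_cast; ring,
            Gamma_add_one hpos.ne', factorial_succ]
          push_cast
          ring

lemma inv_factorial_mul_Gamma_le (m : ℕ) :
    ((m ! : ℝ) * Gamma (m + ν + 1))⁻¹ ≤ (ν + 2) / Gamma (ν + 2) * (16 ^ m / (2 * m)!) := by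
  have hG : 0 < Gamma (ν + 2) := Gamma_pos_of_pos (by linarith)
  rcases Nat.eq_zero_or_pos m with rfl | hm
  · have h : (Gamma (ν + 1))⁻¹ = (ν + 1) / Gamma (ν + 2) := by
      rw [inv_Gamma_eq_mul_inv_Gamma_add_one, add_assoc, one_add_one_eq_two, div_eq_mul_inv]
    simp only [factorial_zero, cast_one, CharP.cast_eq_zero, zero_add, one_mul, pow_zero,
      mul_zero, div_one, mul_one, h]
    gcongr
    linarith
  · have hΓ : 0 < Gamma (m + ν + 1) := by
      apply Gamma_pos_of_pos
      have : (1 : ℝ) ≤ m := by exact_mod_cast hm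
      linarith
    rw [_root_.div_mul_div_comm, ← one_div, div_le_div_iff₀ (by positivity) (by positivity)]
    linarith [Gamma_mul_factorial_two_mul_le hν hm]

variable {x : ℝ} (hx : 0 < x)
include hx

lemma besselI_term_le (m : ℕ) :
    (x / 2) ^ (2 * (m : ℝ) + ν) / ((m ! : ℝ) * Gamma (m + ν + 1)) ≤
      (ν + 2) / Gamma (ν + 2) * (x / 2) ^ ν * ((2 * x) ^ (2 * m) / (2 * m)!) := by
  have hx2 : 0 < x / 2 := by linarith
  have hsplit : (x / 2) ^ (2 * (m : ℝ) + ν) = (x / 2) ^ ν * (x / 2) ^ (2 * m) := by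
    rw [rpow_add hx2, mul_comm, ← rpow_natCast, cast_mul, cast_ofNat]
  have h16 : (x / 2) ^ (2 * m) * 16 ^ m = (2 * x) ^ (2 * m) := by
    rw [pow_mul, pow_mul, ← mul_pow]
    ring_nf
  calc (x / 2) ^ (2 * (m : ℝ) + ν) / ((m ! : ℝ) * Gamma (m + ν + 1))
      = (x / 2) ^ ν * (x / 2) ^ (2 * m) * ((m ! : ℝ) * Gamma (m + ν + 1))⁻¹ := by
        rw [hsplit, div_eq_mul_inv]
    _ ≤ (x / 2) ^ ν * (x / 2) ^ (2 * m) * ((ν + 2) / Gamma (ν + 2) * (16 ^ m / (2 * m)!)) := by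
        gcongr
        exact inv_factorial_mul_Gamma_le hν m
    _ = (ν + 2) / Gamma (ν + 2) * (x / 2) ^ ν * ((2 * x) ^ (2 * m) / (2 * m)!) := by
        rw [← h16]
        ring

lemma besselI_le_mul_cosh :
    besselI ν x ≤ (ν + 2) / Gamma (ν + 2) * (x / 2) ^ ν * cosh (2 * x) := by
  have hcosh := (hasSum_cosh (2 * x)).mul_left ((ν + 2) / Gamma (ν + 2) * (x / 2) ^ ν)
  have hsummable : Summable fun m : ℕ =>
      (x / 2) ^ (2 * (m : ℝ) + ν) / ((m ! : ℝ) * Gamma (m + ν + 1)) := by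
    refine hcosh.summable.of_norm_bounded_eventually_nat ?_
    filter_upwards [Filter.eventually_ge_atTop 1] with m hm
    have hΓ : 0 < Gamma (m + ν + 1) := by
      apply Gamma_pos_of_pos
      have : (1 : ℝ) ≤ m := by exact_mod_cast hm
      linarith
    rw [Real.norm_of_nonneg (by positivity)]
    exact besselI_term_le hν hx m
  exact hasSum_le (besselI_term_le hν hx) hsummable.hasSum hcosh

end

theorem stmt_5 (x ν : ℝ) (hx : 0 < x) (hν : -(3 : ℝ) / 2 < ν) :
    besselI ν x < ((ν + 2) / Real.Gamma (ν + 2)) * (x / 2) ^ ν * Real.exp (2 * x) := by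
  have hC : 0 < (ν + 2) / Gamma (ν + 2) * (x / 2) ^ ν := by
    have : 0 < ν + 2 := by linarith
    have : 0 < Gamma (ν + 2) := Gamma_pos_of_pos this
    have : 0 < (x / 2) ^ ν := rpow_pos_of_pos (by linarith) ν
    positivity
  calc besselI ν x ≤ (ν + 2) / Gamma (ν + 2) * (x / 2) ^ ν * cosh (2 * x) :=
        besselI_le_mul_cosh hν hx
    _ < (ν + 2) / Gamma (ν + 2) * (x / 2) ^ ν * exp (2 * x) :=
        mul_lt_mul_of_pos_left (cosh_lt_exp (by linarith)) hC
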